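/- arXiv:1711.06462 — 3 statements merged into one kernel-verified Lean document; each statement's English description precedes it below -/
import Mathlib

section
/- Let M be an n×n matrix over a field F, and let G, H be invertible upper triangular n×n matrices. Then Piv(G·M·Hᵀ) = Piv(M), where Piv denotes the set of maximal elements of the support of a matrix with respect to the product order on [n]×[n]. -/
open Matrix

namespace SchubertCell

/-- The strict down-set of a subset of a poset. -/
def Down {X : Type*} [Preorder X] (Y : Set X) : Set X := {x | ∃ y ∈ Y, x < y}

variable {F : Type*} [Field F] {n : ℕ}

/-- The pivot-set of a matrix: the maximal elements of the support
under the componentwise (product) order on indices. -/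
def Piv (M : Matrix (Fin n) (Fin n) F) : Set (Fin n × Fin n) :=
  {p | M p.1 p.2 ≠ 0 ∧ ∀ q : Fin n × Fin n, p < q → M q.1 q.2 = 0}

/-- Upper triangular matrix. -/
def UpperTri (G : Matrix (Fin n) (Fin n) F) : Prop := ∀ i j : Fin n, j < i → G i j = 0

/-- `M i j` is the last (largest row index) nonzero entry of column `j`. -/
def IsLast (M : Matrix (Fin n) (Fin n) F) (i j : Fin n) : Prop :=
  M i j ≠ 0 ∧ ∀ i' : Fin n, i < i' → M i' j = 0

/-- Reduced reverse column echelon form: (CE1), (CE2), (CE3). -/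
def IsRRCEF (M : Matrix (Fin n) (Fin n) F) : Prop :=
  (∀ j j' : Fin n, j ≤ j' → (∃ i, M i j' ≠ 0) → ∃ i, M i j ≠ 0) ∧
  (∀ i j i' j' : Fin n, IsLast M i j → IsLast M i' j' → j < j' → i' < i) ∧
  (∀ i j : Fin n, IsLast M i j → M i j = 1 ∧ ∀ j' : Fin n, j' ≠ j → M i j' = 0)

/-- `D(α)`: elements of the strict down-set of `α` whose row contains no element of `α`. -/
def DSet (α : Set (Fin n × Fin n)) : Set (Fin n × Fin n) :=
  {p | p ∈ Down α ∧ ∀ k : Fin n, (p.1, k) ∉ α}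

/-! Since `G` and `H` are upper triangular, `(G * M * Hᵀ) a b` is a combination of the entries
`M k l` with `(a, b) ≤ (k, l)`. If `(a, b)` lies above a pivot `p` of `M`, the only such entry that
can be nonzero is `M p`, with coefficient `G a p.1 * H b p.2`; this vanishes unless `(a, b) = p`,
where it is a product of nonzero diagonal entries. So every pivot of `M` is a pivot of
`G * M * Hᵀ`, and applying this to `G⁻¹` and `H⁻¹`, again upper triangular, gives the converse. -/

lemma UpperTri.isUpperTriangular {G : Matrix (Fin n) (Fin n) F} (hG : UpperTri G) :
    G.IsUpperTriangular :=
  fun i j h => hG i j h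

lemma UpperTri.diag_ne_zero {G : Matrix (Fin n) (Fin n) F} (hGt : UpperTri G) (hG : IsUnit G)
    (i : Fin n) : G i i ≠ 0 := by
  have hdet := (isUnit_iff_isUnit_det G).mp hG
  rw [det_of_isUpperTriangular hGt.isUpperTriangular, isUnit_iff_ne_zero,
    Finset.prod_ne_zero_iff] at hdet
  exact hdet i (Finset.mem_univ i)

/-- Holds for every `G`: when `G` is singular, `G⁻¹ = 0`. -/
lemma UpperTri.nonsing_inv {G : Matrix (Fin n) (Fin n) F} (hG : UpperTri G) : UpperTri G⁻¹ := by
  by_cases hdet : IsUnit G.det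
  · have := G.invertibleOfIsUnitDet hdet
    exact fun i j h => blockTriangular_inv_of_blockTriangular hG.isUpperTriangular h
  · simp [UpperTri, nonsing_inv_apply_not_isUnit G hdet]

lemma mul_mul_transpose_apply_of_mem_piv {M G H : Matrix (Fin n) (Fin n) F} (hG : UpperTri G)
    (hH : UpperTri H) {p : Fin n × Fin n} (hp : p ∈ Piv M) {a b : Fin n} (hab : p ≤ (a, b)) :
    (G * M * Hᵀ) a b = G a p.1 * M p.1 p.2 * H b p.2 := by
  have hsum : (G * M * Hᵀ) a b = ∑ q : Fin n × Fin n, G a q.1 * M q.1 q.2 * H b q.2 := by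
    simp only [mul_apply, transpose_apply, Finset.sum_mul, Fintype.sum_prod_type]
    exact Finset.sum_comm
  rw [hsum, Finset.sum_eq_single p]
  · rintro ⟨k, l⟩ - hq
    rcases lt_or_ge k a with hk | hk
    · simp [hG a k hk]
    rcases lt_or_ge l b with hl | hl
    · simp [hH b l hl]
    simp [hp.2 (k, l) (lt_of_le_of_ne (hab.trans ⟨hk, hl⟩) (Ne.symm hq))]
  · simp

lemma piv_subset_piv_mul_mul_transpose (M : Matrix (Fin n) (Fin n) F)
    {G H : Matrix (Fin n) (Fin n) F} (hG : UpperTri G) (hH : UpperTri H)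
    (hGd : ∀ i, G i i ≠ 0) (hHd : ∀ j, H j j ≠ 0) :
    Piv M ⊆ Piv (G * M * Hᵀ) := by
  rintro ⟨i, j⟩ hp
  refine ⟨?_, fun ⟨a, b⟩ hlt => ?_⟩
  · rw [mul_mul_transpose_apply_of_mem_piv hG hH hp le_rfl]
    exact mul_ne_zero (mul_ne_zero (hGd i) hp.1) (hHd j)
  · rw [mul_mul_transpose_apply_of_mem_piv hG hH hp hlt.le]
    rcases Prod.lt_iff.mp hlt with ⟨hi, -⟩ | ⟨-, hj⟩
    · simp [hG a i hi]
    · simp [hH b j hj]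

theorem pivot_eq_of_triangular_action {F : Type*} [Field F] {n : ℕ}
    (M G H : Matrix (Fin n) (Fin n) F)
    (hG : IsUnit G) (hH : IsUnit H) (hGt : UpperTri G) (hHt : UpperTri H) :
    Piv (G * M * Hᵀ) = Piv M := by
  have hGdet : IsUnit G.det := (isUnit_iff_isUnit_det G).mp hG
  have hHdet : IsUnit Hᵀ.det := by rwa [det_transpose, ← isUnit_iff_isUnit_det]
  have hcancel : G⁻¹ * (G * M * Hᵀ) * H⁻¹ᵀ = M := by
    rw [transpose_nonsing_inv, Matrix.mul_assoc G, nonsing_inv_mul_cancel_left _ _ hGdet,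
      mul_nonsing_inv_cancel_right _ _ hHdet]
  refine Set.Subset.antisymm ?_
    (piv_subset_piv_mul_mul_transpose M hGt hHt (hGt.diag_ne_zero hG) (hHt.diag_ne_zero hH))
  have hback := piv_subset_piv_mul_mul_transpose (G * M * Hᵀ) hGt.nonsing_inv hHt.nonsing_inv
    (hGt.nonsing_inv.diag_ne_zero (isUnit_nonsing_inv_iff.mpr hG))
    (hHt.nonsing_inv.diag_ne_zero (isUnit_nonsing_inv_iff.mpr hH))
  rwa [hcancel] at hback

end SchubertCell
end

section
/- Let F be a finite field with q elements, 1 ≤ m ≤ n−1, and α an antichain of size m in [n]×[m]. Then the Schubert cell O_α of reduced reverse column echelon matrices with pivot-set α has cardinality q^{|D(α)|} = q^{|λ|}, where λ = φ_m(α) and |λ| = λ_1 + … + λ_{n−m}. -/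
/-!
In a reduced reverse column echelon matrix with pivot set `α`, every pivot entry is `1`, the
rest of a pivot row vanishes, and so does every entry that lies in a pivot-free row but not
strictly above the pivot of its column (in particular every entry of a column without pivot).
Only the entries on `D(α)` remain, so a matrix of `O_α` is determined by them. Conversely,
since `α` is an antichain whose columns are exactly `0, …, m - 1`, putting `1` on `α` and
arbitrary values on `D(α)` always gives a matrix of `O_α`. Hence `O_α ≃ (D(α) → F)`, and
`|D(α)| = |λ|` is `D(α)` counted row by row.
-/

open Matrix

namespace SchubertCell

variable {F : Type*} [Field F] {n : ℕ}

theorem _root_.Set.ncard_eq_sum_ncard_fiber {X Y ι : Type*} [Finite Y] [Fintype ι]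
    {S : Set (X × Y)} {d : ι → X} (hd : Function.Injective d)
    (hS : ∀ p ∈ S, p.1 ∈ Set.range d) :
    S.ncard = ∑ i, {y | (d i, y) ∈ S}.ncard := by
  let g : (Σ i, {y // (d i, y) ∈ S}) → S := fun x => ⟨(d x.1, x.2.1), x.2.2⟩
  have hg : Function.Bijective g := by
    refine ⟨?_, fun ⟨p, hp⟩ => ?_⟩
    · rintro ⟨i, y, hy⟩ ⟨i', y', hy'⟩ h
      obtain ⟨hi, rfl⟩ := Prod.ext_iff.1 (congrArg Subtype.val h)
      obtain rfl := hd hi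
      rfl
    · obtain ⟨i, hi⟩ := hS p hp
      exact ⟨⟨i, p.2, by rwa [hi]⟩, Subtype.ext (Prod.ext hi rfl)⟩
  rw [← Nat.card_coe_set_eq, ← Nat.card_eq_of_bijective g hg, Nat.card_sigma]
  rfl

theorem _root_.IsAntichain.injOn_fst {X Y : Type*} [Preorder X] [LinearOrder Y]
    {s : Set (X × Y)} (hs : IsAntichain (· ≤ ·) s) : Set.InjOn Prod.fst s := by
  intro p hp q hq hpq
  by_contra hne
  rcases le_total p.2 q.2 with h | h
  · exact hs hp hq hne (Prod.le_def.2 ⟨hpq.le, h⟩)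
  · exact hs hq hp (Ne.symm hne) (Prod.le_def.2 ⟨hpq.ge, h⟩)

theorem _root_.IsAntichain.injOn_snd {X Y : Type*} [LinearOrder X] [Preorder Y]
    {s : Set (X × Y)} (hs : IsAntichain (· ≤ ·) s) : Set.InjOn Prod.snd s := by
  intro p hp q hq hpq
  by_contra hne
  rcases le_total p.1 q.1 with h | h
  · exact hs hp hq hne (Prod.le_def.2 ⟨h, hpq.le⟩)
  · exact hs hq hp (Ne.symm hne) (Prod.le_def.2 ⟨h, hpq.ge⟩)

theorem isLowerSet_image_snd_of_ncard_eq {X : Type*} [LinearOrder X] {k m : ℕ}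
    {s : Set (X × Fin k)} (hs : IsAntichain (· ≤ ·) s) (hcol : ∀ p ∈ s, (p.2 : ℕ) < m)
    (hcard : s.ncard = m) : IsLowerSet (Prod.snd '' s) := by
  have hcols : (fun p : X × Fin k => (p.2 : ℕ)) '' s = Set.Iio m := by
    refine Set.eq_of_subset_of_ncard_le (Set.image_subset_iff.2 hcol) ?_
    rw [Set.ncard_Iio_nat, Set.InjOn.ncard_image, hcard]
    exact Fin.val_injective.injOn.comp hs.injOn_snd (Set.mapsTo_image _ _)
  rintro _ j hj ⟨p, hp, rfl⟩
  obtain ⟨q, hq, hqj⟩ : (j : ℕ) ∈ (fun p : X × Fin k => (p.2 : ℕ)) '' s :=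
    hcols ▸ (show (j : ℕ) < m from lt_of_le_of_lt hj (hcol p hp))
  exact ⟨q, hq, Fin.ext hqj⟩

lemma exists_isLast (M : Matrix (Fin n) (Fin n) F) {j : Fin n} (h : ∃ i, M i j ≠ 0) :
    ∃ i, IsLast M i j := by
  classical
  let s := Finset.univ.filter (fun i => M i j ≠ 0)
  obtain ⟨i₀, hi₀⟩ := h
  have hs : s.Nonempty := ⟨i₀, by simp [s, hi₀]⟩
  refine ⟨s.max' hs, by simpa [s] using s.max'_mem hs, fun i hi => ?_⟩
  by_contra h0
  exact (s.le_max' i (by simpa [s] using h0)).not_gt hi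

lemma IsLast.le_of_ne_zero {M : Matrix (Fin n) (Fin n) F} {i j i' : Fin n} (h : IsLast M i j)
    (h' : M i' j ≠ 0) : i' ≤ i :=
  not_lt.1 fun hlt => h' (h.2 i' hlt)

namespace IsRRCEF

variable {M N : Matrix (Fin n) (Fin n) F}

theorem mem_piv_iff (hM : IsRRCEF M) {p : Fin n × Fin n} :
    p ∈ Piv M ↔ IsLast M p.1 p.2 := by
  obtain ⟨i, j⟩ := p
  refine ⟨fun ⟨hne, hmax⟩ => ⟨hne, fun i' hi' => hmax _ (Prod.mk_lt_mk_iff_left.2 hi')⟩,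
    fun hij => ⟨hij.1, ?_⟩⟩
  rintro ⟨i', j'⟩ hlt
  obtain ⟨hi, hj⟩ := Prod.mk_le_mk.1 hlt.le
  by_contra h0
  rcases hj.eq_or_lt with rfl | hj
  · exact h0 (hij.2 i' (Prod.mk_lt_mk_iff_left.1 hlt))
  · obtain ⟨i'', hi''⟩ := exists_isLast M ⟨i', h0⟩
    exact (hi.trans (hi''.le_of_ne_zero h0)).not_gt (hM.2.1 i j i'' j' hij hi'' hj)

theorem apply_eq_one (hM : IsRRCEF M) {p : Fin n × Fin n} (hp : p ∈ Piv M) : M p.1 p.2 = 1 :=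
  (hM.2.2 p.1 p.2 (hM.mem_piv_iff.1 hp)).1

theorem apply_eq_zero (hM : IsRRCEF M) {p : Fin n × Fin n} (hp : p ∉ Piv M)
    (hpD : p ∉ DSet (Piv M)) : M p.1 p.2 = 0 := by
  by_cases hrow : ∃ k, (p.1, k) ∈ Piv M
  · obtain ⟨k, hk⟩ := hrow
    exact (hM.2.2 p.1 k (hM.mem_piv_iff.1 hk)).2 p.2 fun h => hp (h ▸ hk : (p.1, p.2) ∈ Piv M)
  · push Not at hrow
    by_contra h0
    obtain ⟨i, hi⟩ := exists_isLast M ⟨p.1, h0⟩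
    have hiα : (i, p.2) ∈ Piv M := hM.mem_piv_iff.2 hi
    have hlt : p.1 < i := lt_of_le_of_ne (hi.le_of_ne_zero h0) fun h => hrow p.2 (h ▸ hiα)
    exact hpD ⟨⟨(i, p.2), hiα, Prod.mk_lt_mk_of_lt_of_le hlt le_rfl⟩, hrow⟩

theorem ext_of_piv_eq {α : Set (Fin n × Fin n)} (hM : IsRRCEF M) (hN : IsRRCEF N)
    (hMα : Piv M = α) (hNα : Piv N = α) (h : ∀ p ∈ DSet α, M p.1 p.2 = N p.1 p.2) :
    M = N := by
  subst hMα
  ext i j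
  by_cases h1 : (i, j) ∈ Piv M
  · exact (hM.apply_eq_one h1).trans (hN.apply_eq_one (hNα ▸ h1)).symm
  by_cases h2 : (i, j) ∈ DSet (Piv M)
  · exact h _ h2
  exact (hM.apply_eq_zero h1 h2).trans (hN.apply_eq_zero (hNα ▸ h1) (hNα ▸ h2)).symm

end IsRRCEF

section Cell

variable {α : Set (Fin n × Fin n)}

lemma mem_dSet_iff (hanti : IsAntichain (· ≤ ·) α) (hcols : IsLowerSet (Prod.snd '' α))
    {p : Fin n × Fin n} :
    p ∈ DSet α ↔ (∃ i, p.1 < i ∧ (i, p.2) ∈ α) ∧ ∀ k, (p.1, k) ∉ α := by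
  refine ⟨fun ⟨⟨y, hy, hpy⟩, hrow⟩ => ⟨?_, hrow⟩, fun ⟨⟨i, hi, hiα⟩, hrow⟩ =>
    ⟨⟨(i, p.2), hiα, Prod.mk_lt_mk_of_lt_of_le hi le_rfl⟩, hrow⟩⟩
  obtain ⟨x, hx, hx2⟩ := hcols (Prod.le_def.1 hpy.le).2 ⟨y, hy, rfl⟩
  -- if the element `x` of `α` in column `p.2` had row `≤ p.1`, then `x < y` inside `α`
  refine ⟨x.1, not_le.1 fun hle => hanti.not_lt hx hy ?_, hx2 ▸ hx⟩
  exact lt_of_le_of_lt (Prod.le_def.2 ⟨hle, hx2.le⟩) hpy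

open Classical in
noncomputable def cellMatrix (α : Set (Fin n × Fin n)) (f : DSet α → F) :
    Matrix (Fin n) (Fin n) F :=
  of fun i j => if (i, j) ∈ α then 1 else if h : (i, j) ∈ DSet α then f ⟨(i, j), h⟩ else 0

variable {f : DSet α → F} {i j : Fin n}

lemma cellMatrix_apply_of_mem (h : (i, j) ∈ α) : cellMatrix α f i j = 1 := by
  simp [cellMatrix, h]

lemma cellMatrix_apply_of_mem_dSet (h : (i, j) ∈ DSet α) :
    cellMatrix α f i j = f ⟨(i, j), h⟩ := by
  simp [cellMatrix, h, h.2 j]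

lemma cellMatrix_apply_of_notMem (h : (i, j) ∉ α) (hD : (i, j) ∉ DSet α) :
    cellMatrix α f i j = 0 := by
  simp [cellMatrix, h, hD]

lemma mem_or_mem_dSet_of_cellMatrix_ne_zero (h : cellMatrix α f i j ≠ 0) :
    (i, j) ∈ α ∨ (i, j) ∈ DSet α := by
  by_contra! hc
  exact h (cellMatrix_apply_of_notMem hc.1 hc.2)

lemma isLast_cellMatrix_iff (hanti : IsAntichain (· ≤ ·) α)
    (hcols : IsLowerSet (Prod.snd '' α)) : IsLast (cellMatrix α f) i j ↔ (i, j) ∈ α := by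
  refine ⟨fun ⟨hne, hlast⟩ => (mem_or_mem_dSet_of_cellMatrix_ne_zero hne).resolve_right ?_,
    fun hij => ⟨?_, fun i' hi' => cellMatrix_apply_of_notMem ?_ ?_⟩⟩
  · intro hD
    obtain ⟨i', hi', hi'α⟩ := ((mem_dSet_iff hanti hcols).1 hD).1
    exact zero_ne_one (hlast i' hi' ▸ cellMatrix_apply_of_mem hi'α)
  · exact ne_of_eq_of_ne (cellMatrix_apply_of_mem hij) one_ne_zero
  · exact fun hi'α => hi'.ne (congrArg Prod.fst (hanti.injOn_snd hij hi'α rfl))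
  · intro hD
    obtain ⟨i'', hi'', hi''α⟩ := ((mem_dSet_iff hanti hcols).1 hD).1
    obtain rfl : i = i'' := congrArg Prod.fst (hanti.injOn_snd hij hi''α rfl)
    exact (hi'.trans hi'').false

lemma isRRCEF_cellMatrix (hanti : IsAntichain (· ≤ ·) α)
    (hcols : IsLowerSet (Prod.snd '' α)) : IsRRCEF (cellMatrix α f) := by
  refine ⟨fun j j' hjj' ⟨i, hi⟩ => ?_, fun i j i' j' h h' hjj' => ?_, fun i j h => ?_⟩
  · obtain ⟨y, hy, hy'⟩ : ∃ y ∈ α, j' ≤ y.2 := by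
      rcases mem_or_mem_dSet_of_cellMatrix_ne_zero hi with hα | ⟨⟨y, hy, hlt⟩, -⟩
      · exact ⟨_, hα, le_rfl⟩
      · exact ⟨y, hy, (Prod.le_def.1 hlt.le).2⟩
    obtain ⟨x, hx, rfl⟩ := hcols (hjj'.trans hy') ⟨y, hy, rfl⟩
    exact ⟨x.1, ne_of_eq_of_ne (cellMatrix_apply_of_mem hx) one_ne_zero⟩
  · rw [isLast_cellMatrix_iff hanti hcols] at h h'
    exact not_le.1 fun hii' => hanti.not_lt h h' (Prod.mk_lt_mk_of_le_of_lt hii' hjj')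
  · rw [isLast_cellMatrix_iff hanti hcols] at h
    refine ⟨cellMatrix_apply_of_mem h, fun j' hj' => cellMatrix_apply_of_notMem ?_ ?_⟩
    · exact fun h' => hj' (congrArg Prod.snd (hanti.injOn_fst h' h rfl))
    · exact fun hD => hD.2 j h

lemma piv_cellMatrix (hanti : IsAntichain (· ≤ ·) α) (hcols : IsLowerSet (Prod.snd '' α)) :
    Piv (cellMatrix α f) = α := by
  ext ⟨i, j⟩
  rw [(isRRCEF_cellMatrix hanti hcols).mem_piv_iff]
  exact isLast_cellMatrix_iff hanti hcols

noncomputable def cellEquiv (hanti : IsAntichain (· ≤ ·) α)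
    (hcols : IsLowerSet (Prod.snd '' α)) :
    {M : Matrix (Fin n) (Fin n) F // IsRRCEF M ∧ Piv M = α} ≃ (DSet α → F) where
  toFun M p := M.1 p.1.1 p.1.2
  invFun f := ⟨cellMatrix α f, isRRCEF_cellMatrix hanti hcols, piv_cellMatrix hanti hcols⟩
  left_inv := fun ⟨M, hM, hMα⟩ => Subtype.ext <|
    (isRRCEF_cellMatrix hanti hcols).ext_of_piv_eq hM (piv_cellMatrix hanti hcols) hMα
      fun (_, _) hp => cellMatrix_apply_of_mem_dSet (f := fun p => M p.1.1 p.1.2) hp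
  right_inv _ := funext fun ⟨_, hp⟩ => cellMatrix_apply_of_mem_dSet hp

end Cell

theorem schubert_cell_card_general {F : Type*} [Field F] [Fintype F] {n m q : ℕ}
    (hq : Fintype.card F = q)
    (α : Set (Fin n × Fin n)) (hanti : IsAntichain (· ≤ ·) α)
    (hcol : ∀ p ∈ α, (p.2 : ℕ) < m) (hcard : α.ncard = m) :
    Nat.card {M : Matrix (Fin n) (Fin n) F // IsRRCEF M ∧ Piv M = α} =
      q ^ (DSet α).ncard ∧
    (∀ (l : Fin (n - m) → ℕ) (d : Fin (n - m) → Fin n), StrictMono d →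
      (∀ i : Fin n, (∀ k : Fin n, (i, k) ∉ α) ↔ i ∈ Set.range d) →
      (∀ i : Fin (n - m), l i = Set.ncard {j : Fin n | (d i, j) ∈ DSet α}) →
      (DSet α).ncard = ∑ i, l i) := by
  refine ⟨?_, fun l d hd hrows hl => ?_⟩
  · rw [Nat.card_congr (cellEquiv hanti (isLowerSet_image_snd_of_ncard_eq hanti hcol hcard)),
      Nat.card_fun, Nat.card_coe_set_eq, Nat.card_eq_fintype_card, hq]
  · rw [Set.ncard_eq_sum_ncard_fiber hd.injective fun p hp => (hrows p.1).1 hp.2]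
    exact Fintype.sum_congr _ _ fun i => (hl i).symm

theorem schubert_cell_card {F : Type*} [Field F] [Fintype F] {n m q : ℕ}
    (hq : Fintype.card F = q) (hm1 : 1 ≤ m) (hm2 : m ≤ n - 1)
    (α : Set (Fin n × Fin n)) (hanti : IsAntichain (· ≤ ·) α)
    (hcol : ∀ p ∈ α, (p.2 : ℕ) < m) (hcard : α.ncard = m) :
    Nat.card {M : Matrix (Fin n) (Fin n) F // IsRRCEF M ∧ Piv M = α} =
      q ^ (DSet α).ncard ∧
    (∀ (l : Fin (n - m) → ℕ) (d : Fin (n - m) → Fin n), StrictMono d →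
      (∀ i : Fin n, (∀ k : Fin n, (i, k) ∉ α) ↔ i ∈ Set.range d) →
      (∀ i : Fin (n - m), l i = Set.ncard {j : Fin n | (d i, j) ∈ DSet α}) →
      (DSet α).ncard = ∑ i, l i) :=
  schubert_cell_card_general hq α hanti hcol hcard

end SchubertCell
end

section
/- Let F be a finite field with q elements, α an antichain of size m in [n]×[m], and β an antichain in D(α). Fix M ∈ O_α. Then the number of N ∈ O_α with Piv(M−N) = β equals (q−1)^{|β|} · q^{|Down(β)∩D(α)|}, where Down(β) is the strict down-set of β in [n]×[n]. In particular, this valency is independent of M. -/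
open Matrix

namespace SchubertCell

variable {F : Type*} [Field F] {n : ℕ}

/-!
`Piv (M - N) = β` for an antichain `β` says exactly that `M - N` is nonzero on `β` and vanishes
outside `β ∪ Down β`. The cell `O_α` is an affine space: `N ∈ O_α` iff `N` agrees with `M` off
`D(α)`, because every entry of `D(α)` has a pivot of `α` below it in its column, so changing it
can neither create nor destroy the last nonzero entry of a column. Hence the matrices counted are
those differing from `M` by a nonzero amount on `β ⊆ D(α)`, arbitrarily on `Down β ∩ D(α)` and
nowhere else.
-/

theorem disjoint_down_of_isAntichain {X : Type*} [Preorder X] {β : Set X}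
    (hβ : IsAntichain (· ≤ ·) β) : Disjoint β (Down β) :=
  Set.disjoint_left.2 fun _ hp ⟨_, hb, hpb⟩ => hβ hp hb hpb.ne hpb.le

theorem maximals_support_eq_iff_of_isAntichain {X Z : Type*} [PartialOrder X] [Finite X] [Zero Z]
    (f : X → Z) {β : Set X} (hβ : IsAntichain (· ≤ ·) β) :
    {p | f p ≠ 0 ∧ ∀ q, p < q → f q = 0} = β ↔
      (∀ p ∈ β, f p ≠ 0) ∧ ∀ p, p ∉ β → p ∉ Down β → f p = 0 := by
  constructor
  · rintro rfl
    refine ⟨fun p hp => hp.1, fun p hpβ hpDown => by_contra fun hp => ?_⟩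
    obtain ⟨b, hpb, hb⟩ := (Set.toFinite {x | f x ≠ 0}).exists_le_maximal hp
    have hbPiv : f b ≠ 0 ∧ ∀ q, b < q → f q = 0 :=
      ⟨hb.1, fun q hbq => by_contra fun hq => (hb.2 hq hbq.le).not_gt hbq⟩
    rcases hpb.eq_or_lt with rfl | hlt
    · exact hpβ hbPiv
    · exact hpDown ⟨b, hbPiv, hlt⟩
  · rintro ⟨hβ_ne, hzero⟩
    ext p
    refine ⟨fun ⟨hp, hmax⟩ => by_contra fun hpβ => ?_,
      fun hp => ⟨hβ_ne p hp, fun q hpq => ?_⟩⟩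
    · by_cases hpDown : p ∈ Down β
      · obtain ⟨b, hb, hpb⟩ := hpDown
        exact hβ_ne b hb (hmax b hpb)
      · exact hp (hzero p hpβ hpDown)
    · refine hzero q (fun hq => hβ hp hq hpq.ne hpq.le) fun ⟨b, hb, hqb⟩ => ?_
      exact Set.disjoint_left.1 (disjoint_down_of_isAntichain hβ) hp ⟨b, hb, hpq.trans hqb⟩

theorem piv_eq_iff_of_isAntichain {G : Matrix (Fin n) (Fin n) F} {β : Set (Fin n × Fin n)}
    (hβ : IsAntichain (· ≤ ·) β) :
    Piv G = β ↔ (∀ p ∈ β, G p.1 p.2 ≠ 0) ∧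
      ∀ p, p ∉ β → p ∉ Down β → G p.1 p.2 = 0 :=
  maximals_support_eq_iff_of_isAntichain (Function.uncurry G) hβ

open Finset in
theorem ncard_setOf_ne_on_eq_off {ι R : Type*} [Fintype ι] [Fintype R] (f : ι → R)
    {B T : Set ι} (hBT : Disjoint B T) :
    {g : ι → R | (∀ p ∈ B, g p ≠ f p) ∧ ∀ p, p ∉ B → p ∉ T → g p = f p}.ncard =
      (Fintype.card R - 1) ^ B.ncard * Fintype.card R ^ T.ncard := by
  classical
  let S : ι → Finset R := fun p => if p ∈ B then {f p}ᶜ else if p ∈ T then univ else {f p}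
  have hS : {g : ι → R | (∀ p ∈ B, g p ≠ f p) ∧ ∀ p, p ∉ B → p ∉ T → g p = f p} =
      Fintype.piFinset S := by
    ext g
    simp only [Set.mem_ofPred_eq, Fintype.coe_piFinset, Set.mem_pi, Set.mem_univ, true_implies,
      S]
    refine ⟨fun ⟨hB, hT⟩ p => ?_, fun h => ⟨fun p hp => ?_, fun p hpB hpT => ?_⟩⟩
    · split_ifs with hpB hpT
      · simpa using hB p hpB
      · simp
      · simpa using hT p hpB hpT
    · simpa [hp] using h p
    · simpa [hpB, hpT] using h p
  have hcard : ∀ p, (S p).card =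
      (if p ∈ B.toFinset then Fintype.card R - 1 else 1) *
        (if p ∈ T.toFinset then Fintype.card R else 1) := by
    intro p
    simp only [Set.mem_toFinset, S]
    by_cases hpB : p ∈ B
    · simp [hpB, Set.disjoint_left.1 hBT hpB, card_compl]
    · by_cases hpT : p ∈ T <;> simp [hpB, hpT]
  rw [hS, Set.ncard_coe_finset, Fintype.card_piFinset]
  simp only [hcard, prod_mul_distrib, Fintype.prod_ite_mem, prod_const, Set.ncard_eq_toFinset_card']

theorem ncard_setOf_matrix_ne_on_eq_off {R : Type*} [Fintype R] (M : Matrix (Fin n) (Fin n) R)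
    {B T : Set (Fin n × Fin n)} (hBT : Disjoint B T) :
    {N : Matrix (Fin n) (Fin n) R | (∀ p ∈ B, N p.1 p.2 ≠ M p.1 p.2) ∧
        ∀ p, p ∉ B → p ∉ T → N p.1 p.2 = M p.1 p.2}.ncard =
      (Fintype.card R - 1) ^ B.ncard * Fintype.card R ^ T.ncard := by
  rw [← ncard_setOf_ne_on_eq_off (Function.uncurry M) hBT,
    ← Set.ncard_preimage_of_injective_subset_range Function.uncurry_injective
      fun g _ => ⟨Function.curry g, Function.uncurry_curry g⟩]
  rfl

section RRCEF

variable {M N X Y : Matrix (Fin n) (Fin n) F} {α : Set (Fin n × Fin n)} {i i' j : Fin n}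

theorem IsLast.eq (h : IsLast M i j) (h' : IsLast M i' j) : i = i' := by
  by_contra hne
  rcases lt_or_gt_of_ne hne with hlt | hlt
  · exact h'.1 (h.2 i' hlt)
  · exact h.1 (h'.2 i hlt)

theorem exists_isLast_iff : (∃ i, IsLast M i j) ↔ ∃ i, M i j ≠ 0 := by
  refine ⟨fun ⟨i, hi⟩ => ⟨i, hi.1⟩, fun ⟨i, hi⟩ => ?_⟩
  obtain ⟨c, -, hc⟩ := (Set.toFinite {i | M i j ≠ 0}).exists_le_maximal hi
  exact ⟨c, hc.1, fun i' hci' => by_contra fun h => (hc.2 h hci'.le).not_gt hci'⟩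

theorem IsRRCEF.mem_piv_iff_s19 (hM : IsRRCEF M) {p : Fin n × Fin n} :
    p ∈ Piv M ↔ IsLast M p.1 p.2 := by
  obtain ⟨i, j⟩ := p
  refine ⟨fun ⟨hij, hmax⟩ => 
      ⟨hij, fun i' hi' => hmax (i', j) (Prod.mk_lt_mk_of_lt_of_le hi' le_rfl)⟩,
    fun hlast => ⟨hlast.1, ?_⟩⟩
  rintro ⟨i', j'⟩ hlt
  obtain ⟨hii', hjj'⟩ := Prod.mk_le_mk.1 hlt.le
  rcases hjj'.lt_or_eq with hjj' | rfl
  · by_contra hz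
    obtain ⟨c, hc⟩ := exists_isLast_iff.2 ⟨i', hz⟩
    exact hz (hc.2 i' ((hM.2.1 i j c j' hlast hc hjj').trans_le hii'))
  · exact hlast.2 i' (hii'.lt_of_ne fun h => hlt.ne (by rw [h]))

theorem IsRRCEF.isLast_iff_mem (hM : IsRRCEF M) (hMα : Piv M = α) :
    IsLast M i j ↔ (i, j) ∈ α := by
  rw [← hMα, hM.mem_piv_iff_s19]

theorem not_mem_dSet_of_mem {p : Fin n × Fin n} (hp : p ∈ α) : p ∉ DSet α :=
  fun h => h.2 p.2 hp

theorem IsRRCEF.eq_zero_of_not_mem (hM : IsRRCEF M) (hMα : Piv M = α)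
    (hα : (i, j) ∉ α) (hD : (i, j) ∉ DSet α) : M i j = 0 := by
  by_contra hz
  obtain ⟨c, hc⟩ := exists_isLast_iff.2 ⟨i, hz⟩
  have hcα : (c, j) ∈ α := (hM.isLast_iff_mem hMα).1 hc
  have hic : i < c := (le_of_not_gt fun hci => hz (hc.2 i hci)).lt_of_ne fun h => hα (h ▸ hcα)
  refine hD ⟨⟨(c, j), hcα, Prod.mk_lt_mk_of_lt_of_le hic le_rfl⟩, fun k hk => ?_⟩
  have hik : IsLast M i k := (hM.isLast_iff_mem hMα).2 hk
  obtain rfl | hkj := eq_or_ne k j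
  · exact hic.ne (hik.eq hc)
  · exact hz ((hM.2.2 i k hik).2 j hkj.symm)

theorem IsRRCEF.exists_mem_of_mem_dSet (hM : IsRRCEF M) (hMα : Piv M = α)
    (h : (i, j) ∈ DSet α) : ∃ c, i < c ∧ (c, j) ∈ α := by
  obtain ⟨⟨⟨a, b⟩, hab, hlt⟩, hrow⟩ := h
  obtain ⟨hia, hjb⟩ := Prod.mk_le_mk.1 hlt.le
  have hlast_ab : IsLast M a b := (hM.isLast_iff_mem hMα).2 hab
  obtain ⟨c, hc⟩ := exists_isLast_iff.2 (hM.1 j b hjb (exists_isLast_iff.1 ⟨a, hlast_ab⟩))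
  have hac : a ≤ c := by
    rcases hjb.lt_or_eq with hjb | rfl
    · exact (hM.2.1 c j a b hc hlast_ab hjb).le
    · exact (hlast_ab.eq hc).le
  have hcα : (c, j) ∈ α := (hM.isLast_iff_mem hMα).1 hc
  exact ⟨c, (hia.trans hac).lt_of_ne fun h => hrow j (h ▸ hcα), hcα⟩

theorem IsLast.of_eqOn_compl_dSet (hM : IsRRCEF M) (hMα : Piv M = α)
    (hX : ∀ p ∉ DSet α, X p.1 p.2 = M p.1 p.2) (hY : ∀ p ∉ DSet α, Y p.1 p.2 = M p.1 p.2)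
    (h : IsLast X i j) : IsLast Y i j := by
  have hXY : ∀ p ∉ DSet α, Y p.1 p.2 = X p.1 p.2 := fun p hp => (hY p hp).trans (hX p hp).symm
  have hbelow : ∀ i', (i', j) ∈ DSet α → ∃ c, i' < c ∧ X c j ≠ 0 := by
    intro i' hi'
    obtain ⟨c, hi'c, hcα⟩ := hM.exists_mem_of_mem_dSet hMα hi'
    refine ⟨c, hi'c, ?_⟩
    rw [hX (c, j) (not_mem_dSet_of_mem hcα)]
    exact ((hM.isLast_iff_mem hMα).2 hcα).1
  have hij : (i, j) ∉ DSet α := fun hD => by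
    obtain ⟨c, hic, hc⟩ := hbelow i hD
    exact hc (h.2 c hic)
  refine ⟨by rw [hXY (i, j) hij]; exact h.1, fun i' hii' => ?_⟩
  by_cases hD : (i', j) ∈ DSet α
  · obtain ⟨c, hi'c, hc⟩ := hbelow i' hD
    exact absurd (h.2 c (hii'.trans hi'c)) hc
  · rw [hXY (i', j) hD]
    exact h.2 i' hii'

theorem IsRRCEF.of_isLast_iff (hM : IsRRCEF M) (hlast : ∀ i j, IsLast N i j ↔ IsLast M i j)
    (hrow : ∀ i j, IsLast M i j → ∀ j', N i j' = M i j') : IsRRCEF N := by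
  have hcol : ∀ j, (∃ i, N i j ≠ 0) ↔ ∃ i, M i j ≠ 0 := fun j => by
    simp only [← exists_isLast_iff, hlast]
  refine ⟨fun j j' hjj' h => (hcol j).2 (hM.1 j j' hjj' ((hcol j').1 h)),
    fun i j i' j' h h' => hM.2.1 i j i' j' ((hlast i j).1 h) ((hlast i' j').1 h'),
    fun i j h => ?_⟩
  have hM_ij := hM.2.2 i j ((hlast i j).1 h)
  refine ⟨(hrow i j ((hlast i j).1 h) j).trans hM_ij.1, fun j' hj' => ?_⟩
  rw [hrow i j ((hlast i j).1 h) j']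
  exact hM_ij.2 j' hj'

theorem IsRRCEF.cell_iff (hM : IsRRCEF M) (hMα : Piv M = α) :
    (IsRRCEF N ∧ Piv N = α) ↔ ∀ p ∉ DSet α, N p.1 p.2 = M p.1 p.2 := by
  constructor
  · rintro ⟨hN, hNα⟩ ⟨i, j⟩ hD
    by_cases hα : (i, j) ∈ α
    · rw [(hN.2.2 i j ((hN.isLast_iff_mem hNα).2 hα)).1,
        (hM.2.2 i j ((hM.isLast_iff_mem hMα).2 hα)).1]
    · rw [hN.eq_zero_of_not_mem hNα hα hD, hM.eq_zero_of_not_mem hMα hα hD]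
  · intro hNM
    have hlast : ∀ i j, IsLast N i j ↔ IsLast M i j := fun i j =>
      ⟨IsLast.of_eqOn_compl_dSet hM hMα hNM fun _ _ => rfl,
        IsLast.of_eqOn_compl_dSet hM hMα (fun _ _ => rfl) hNM⟩
    have hN : IsRRCEF N := hM.of_isLast_iff hlast fun i j h j' =>
      hNM (i, j') fun hD => hD.2 j ((hM.isLast_iff_mem hMα).1 h)
    refine ⟨hN, ?_⟩
    ext ⟨i, j⟩
    rw [hN.mem_piv_iff_s19, hlast, hM.isLast_iff_mem hMα]

theorem IsRRCEF.cell_and_piv_sub_iff (hM : IsRRCEF M) (hMα : Piv M = α)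
    {β : Set (Fin n × Fin n)} (hβanti : IsAntichain (· ≤ ·) β) (hβ : β ⊆ DSet α) :
    ((IsRRCEF N ∧ Piv N = α) ∧ Piv (M - N) = β) ↔
      (∀ p ∈ β, N p.1 p.2 ≠ M p.1 p.2) ∧
        ∀ p, p ∉ β → p ∉ Down β ∩ DSet α → N p.1 p.2 = M p.1 p.2 := by
  simp only [hM.cell_iff hMα, piv_eq_iff_of_isAntichain hβanti, Matrix.sub_apply, sub_ne_zero,
    sub_eq_zero, ne_comm, eq_comm (a := M _ _)]
  constructor
  · rintro ⟨hcell, hβ_ne, hzero⟩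
    refine ⟨hβ_ne, fun p hpβ hp => ?_⟩
    by_cases hD : p ∈ DSet α
    · exact hzero p hpβ fun hDown => hp ⟨hDown, hD⟩
    · exact hcell p hD
  · rintro ⟨hβ_ne, heq⟩
    exact ⟨fun p hD => heq p (fun hp => hD (hβ hp)) fun hp => hD hp.2, hβ_ne,
      fun p hpβ hpDown => heq p hpβ fun hp => hpDown hp.1⟩

end RRCEF

theorem schubert_cell_valency_general {F : Type*} [Field F] [Fintype F] {n q : ℕ}
    (hq : Fintype.card F = q) (α : Set (Fin n × Fin n))
    (β : Set (Fin n × Fin n)) (hβanti : IsAntichain (· ≤ ·) β) (hβ : β ⊆ DSet α)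
    (M : Matrix (Fin n) (Fin n) F) (hM : IsRRCEF M) (hMα : Piv M = α) :
    Set.ncard {N : Matrix (Fin n) (Fin n) F |
        (IsRRCEF N ∧ Piv N = α) ∧ Piv (M - N) = β} =
      (q - 1) ^ β.ncard * q ^ (Down β ∩ DSet α).ncard := by
  rw [Set.ext fun N => hM.cell_and_piv_sub_iff hMα hβanti hβ, ← hq]
  exact ncard_setOf_matrix_ne_on_eq_off M
    ((disjoint_down_of_isAntichain hβanti).mono_right Set.inter_subset_left)

theorem schubert_cell_valency {F : Type*} [Field F] [Fintype F] {n m q : ℕ}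
    (hq : Fintype.card F = q) (hm1 : 1 ≤ m) (hm2 : m ≤ n - 1)
    (α : Set (Fin n × Fin n)) (hanti : IsAntichain (· ≤ ·) α)
    (hcol : ∀ p ∈ α, (p.2 : ℕ) < m) (hcard : α.ncard = m)
    (β : Set (Fin n × Fin n)) (hβanti : IsAntichain (· ≤ ·) β) (hβ : β ⊆ DSet α)
    (M : Matrix (Fin n) (Fin n) F) (hM : IsRRCEF M) (hMα : Piv M = α) :
    Set.ncard {N : Matrix (Fin n) (Fin n) F |
        (IsRRCEF N ∧ Piv N = α) ∧ Piv (M - N) = β} =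
      (q - 1) ^ β.ncard * q ^ (Down β ∩ DSet α).ncard :=
  schubert_cell_valency_general hq α β hβanti hβ M hM hMα

end SchubertCell
end
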